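/- arXiv:math/0604572 — 3 statements merged into one kernel-verified Lean document; each statement's English description precedes it below -/
import Mathlib

section
/- Maximum principle for one explicit Runge–Kutta step: suppose coefficients α_{ik} ≥ 0, β_{ik} ≥ 0 for 1 ≤ k < i ≤ ν with Σ_{k<i} α_{ik} = 1 and α_{ik} = 0 ⟹ β_{ik} = 0; suppose p : ℝ → ℝ is non-decreasing and Lipschitz with constant μ, τ, σ > 0, and μτ/σ ≤ min{α_{ik}/β_{ik} : β_{ik} ≠ 0}; let S be an operator on bounded measurable functions with S contracting in L∞ and p(-M) ≤ S(p∘u) ≤ p(M) whenever -M ≤ u ≤ M. Define stages u⁽¹⁾ = u⁰ and u⁽ⁱ⁾ = Σ_{k<i} [α_{ik} u⁽ᵏ⁾ + (τβ_{ik}/σ)(S(p∘u⁽ᵏ⁾) - p∘u⁽ᵏ⁾)]. If -M ≤ u⁰ ≤ M, then -M ≤ u⁽ⁱ⁾ ≤ M for all i = 1, …, ν. -/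
open MeasureTheory

theorem stmt_6 {Ω : Type*} [MeasureSpace Ω]
    (ν : ℕ) (α β : ℕ → ℕ → ℝ)
    (hα : ∀ i k, 0 ≤ α i k) (hβ : ∀ i k, 0 ≤ β i k)
    (hzero : ∀ i k, α i k = 0 → β i k = 0)
    (hcons : ∀ i, 2 ≤ i → i ≤ ν → ∑ k ∈ Finset.Ico 1 i, α i k = 1)
    (p : ℝ → ℝ) (hp : Monotone p)
    (μ τ σ : ℝ) (hμ : 0 < μ) (hτ : 0 < τ) (hσ : 0 < σ)
    (hlip : ∀ a b : ℝ, |p a - p b| ≤ μ * |a - b|)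
    (hstab : ∀ i k, β i k ≠ 0 → μ * τ / σ ≤ α i k / β i k)
    (M : ℝ) (hM : 0 < M)
    (S : (Ω → ℝ) → (Ω → ℝ))
    (hS : ∀ (f g : Ω → ℝ) (C : ℝ), (∀ x, |f x - g x| ≤ C) → ∀ x, |S f x - S g x| ≤ C)
    (hSmax : ∀ f : Ω → ℝ, (∀ x, -M ≤ f x ∧ f x ≤ M) →
      ∀ x, p (-M) ≤ S (p ∘ f) x ∧ S (p ∘ f) x ≤ p M)
    (u : ℕ → Ω → ℝ) (u0 : Ω → ℝ)
    (hu0 : ∀ x, -M ≤ u0 x ∧ u0 x ≤ M)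
    (hstage1 : u 1 = u0)
    (hstage : ∀ i, 2 ≤ i → i ≤ ν → ∀ x, u i x =
      ∑ k ∈ Finset.Ico 1 i,
        (α i k * u k x + (τ * β i k / σ) * (S (p ∘ u k) x - p (u k x)))) :
    ∀ i, 1 ≤ i → i ≤ ν → ∀ x, -M ≤ u i x ∧ u i x ≤ M := by

  intro i
  induction i using Nat.strong_induction_on with
  | _ i ih =>
    intro hi1 hiν x
    rcases eq_or_lt_of_le hi1 with h1 | h2
    · rw [← h1, hstage1]; exact hu0 x
    · have key : ∀ k ∈ Finset.Ico 1 i,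
          α i k * (-M) ≤ α i k * u k x + (τ * β i k / σ) * (S (p ∘ u k) x - p (u k x)) ∧
          α i k * u k x + (τ * β i k / σ) * (S (p ∘ u k) x - p (u k x)) ≤ α i k * M := by
        intro k hk
        simp only [Finset.mem_Ico] at hk
        have hub : ∀ y, -M ≤ u k y ∧ u k y ≤ M := ih k hk.2 hk.1 (hk.2.le.trans hiν)
        have hs := hSmax (u k) hub x
        have hw := hub x
        have hc : 0 ≤ τ * β i k / σ := by
          have := hβ i k; positivity
        have hca : (τ * β i k / σ) * μ ≤ α i k := by
          rcases eq_or_ne (β i k) 0 with hb | hb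
          · rw [hb]; simp; exact hα i k
          · have hbpos : 0 < β i k := lt_of_le_of_ne (hβ i k) (Ne.symm hb)
            have h3 := hstab i k hb
            rw [div_le_div_iff₀ hσ hbpos] at h3
            rw [div_mul_eq_mul_div, div_le_iff₀ hσ]
            nlinarith
        have hl1 : p M - p (u k x) ≤ μ * (M - u k x) := by
          have h := (le_abs_self _).trans (hlip M (u k x))
          rwa [abs_of_nonneg (by linarith [hw.2])] at h
        have hl2 : p (u k x) - p (-M) ≤ μ * (u k x + M) := by
          have h := (le_abs_self _).trans (hlip (u k x) (-M))
          rw [abs_of_nonneg (by linarith [hw.1])] at h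
          linarith
        constructor
        · nlinarith [mul_le_mul_of_nonneg_left hl2 hc, hs.1, hc,
            mul_le_mul_of_nonneg_right hca (by linarith [hw.1] : (0:ℝ) ≤ u k x + M)]
        · nlinarith [mul_le_mul_of_nonneg_left hl1 hc, hs.2, hc,
            mul_le_mul_of_nonneg_right hca (by linarith [hw.2] : (0:ℝ) ≤ M - u k x)]
      rw [hstage i h2 hiν x]
      constructor
      · calc -M = ∑ k ∈ Finset.Ico 1 i, α i k * (-M) := by
              rw [← Finset.sum_mul, hcons i h2 hiν, one_mul]
          _ ≤ _ := Finset.sum_le_sum fun k hk => (key k hk).1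
      · calc _ ≤ ∑ k ∈ Finset.Ico 1 i, α i k * M :=
              Finset.sum_le_sum fun k hk => (key k hk).2
          _ = M := by rw [← Finset.sum_mul, hcons i h2 hiν, one_mul]
end

section
/- TVD property of the first-order relaxed scheme: let p : ℝ → ℝ be non-decreasing and Lipschitz with constant μ, h > 0, φ > 0, λ = Δt/h, and consider the scheme u_j^{n+1} = u_j^n + (λ/(4h))(p_{j+2} - p_j) - (λ/(4h))(p_j - p_{j-2}) + (λφ/2)(p_{j+1} - 2p_j + p_{j-1}) with p_j = p(u_j^n), applied to a sequence (u_j^n) with compact support (u_j^n = 0 for |j| large). If Δt ≤ 2h²/(μ(1 + 2hφ)), then the total variation Σ_j |u_j^{n+1} - u_{j-1}^{n+1}| ≤ Σ_j |u_j^n - u_{j-1}^n|. -/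
/-! Write `v j = u j - u (j - 1)` and `d j` for the slope of `p` between `u (j - 1)` and `u j`, so
that `0 ≤ d j ≤ μ` and `d j * v j = p (u j) - p (u (j - 1))`. The differences of the new step are
then `v j + ∑ i, a i * (d (j + s i) * v (j + s i) - d j * v j)` with shifts `s = (2, -2, 1, -1)` and
weights `a = (λ/4h, λ/4h, λφ/2, λφ/2)`, and the CFL condition is `(∑ i, a i) * μ ≤ 1`. Then
`|w j| ≤ (1 - (∑ i, a i) * d j) * |v j| + ∑ i, a i * d (j + s i) * |v (j + s i)|` with nonnegative
coefficients, and after summing over `j` and shifting indices the last sum cancels the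
`-(∑ i, a i) * d j * |v j|` term exactly. -/

section Stencil

variable {G ι : Type*} [AddGroup G] [Fintype ι]

theorem abs_add_sum_stencil_le (s : ι → G) (a : ι → ℝ) (d v : G → ℝ) (μ : ℝ)
    (ha : ∀ i, 0 ≤ a i) (hd₀ : ∀ j, 0 ≤ d j) (hdμ : ∀ j, d j ≤ μ) (hcfl : (∑ i, a i) * μ ≤ 1)
    (j : G) :
    |v j + ∑ i, a i * (d (j + s i) * v (j + s i) - d j * v j)| ≤
      (1 - (∑ i, a i) * d j) * |v j| + ∑ i, a i * (d (j + s i) * |v (j + s i)|) := by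
  have hcoef : 0 ≤ 1 - (∑ i, a i) * d j := by
    nlinarith [Finset.sum_nonneg fun i (_ : i ∈ Finset.univ) => ha i, hd₀ j, hdμ j]
  have hsplit : v j + ∑ i, a i * (d (j + s i) * v (j + s i) - d j * v j) =
      (1 - (∑ i, a i) * d j) * v j + ∑ i, a i * (d (j + s i) * v (j + s i)) := by
    simp only [mul_sub, Finset.sum_sub_distrib, ← Finset.sum_mul]
    ring
  calc _ ≤ |(1 - (∑ i, a i) * d j) * v j| + |∑ i, a i * (d (j + s i) * v (j + s i))| :=
        hsplit ▸ abs_add_le _ _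
    _ ≤ |(1 - (∑ i, a i) * d j) * v j| + ∑ i, |a i * (d (j + s i) * v (j + s i))| := by
        gcongr
        exact Finset.abs_sum_le_sum_abs _ _
    _ = _ := by
        simp only [abs_mul, abs_of_nonneg hcoef, abs_of_nonneg (ha _), abs_of_nonneg (hd₀ _)]

theorem tsum_abs_add_sum_stencil_le (s : ι → G) (a : ι → ℝ) (d v w : G → ℝ) (μ : ℝ)
    (ha : ∀ i, 0 ≤ a i) (hd₀ : ∀ j, 0 ≤ d j) (hdμ : ∀ j, d j ≤ μ) (hcfl : (∑ i, a i) * μ ≤ 1)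
    (hv : Summable fun j => |v j|)
    (hw : ∀ j, w j = v j + ∑ i, a i * (d (j + s i) * v (j + s i) - d j * v j)) :
    ∑' j, |w j| ≤ ∑' j, |v j| := by
  set A := ∑ i, a i
  have hbound := fun j => hw j ▸ abs_add_sum_stencil_le s a d v μ ha hd₀ hdμ hcfl j
  have hdv : Summable fun j => d j * |v j| :=
    (hv.mul_left μ).of_nonneg_of_le (fun j => mul_nonneg (hd₀ j) (abs_nonneg _))
      (fun j => mul_le_mul_of_nonneg_right (hdμ j) (abs_nonneg _))
  have hshift : ∀ k : G, Summable fun j => d (j + k) * |v (j + k)| :=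
    fun k => (Equiv.addRight k).summable_iff.mpr hdv
  have hshift_tsum : ∀ k : G, ∑' j, d (j + k) * |v (j + k)| = ∑' j, d j * |v j| :=
    fun k => (Equiv.addRight k).tsum_eq fun j => d j * |v j|
  have hdiag : Summable fun j => (1 - A * d j) * |v j| := by
    simpa only [sub_mul, one_mul, mul_assoc] using hv.sub (hdv.mul_left A)
  have hdiag_tsum : ∑' j, (1 - A * d j) * |v j| = ∑' j, |v j| - A * ∑' j, d j * |v j| := by
    simp only [sub_mul, one_mul, mul_assoc]
    rw [hv.tsum_sub (hdv.mul_left A), tsum_mul_left]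
  have hoff : Summable fun j => ∑ i, a i * (d (j + s i) * |v (j + s i)|) :=
    summable_sum fun i _ => (hshift (s i)).mul_left (a i)
  calc ∑' j, |w j|
      ≤ ∑' j, ((1 - A * d j) * |v j| + ∑ i, a i * (d (j + s i) * |v (j + s i)|)) :=
        Summable.tsum_le_tsum hbound
          ((hdiag.add hoff).of_nonneg_of_le (fun _ => abs_nonneg _) hbound) (hdiag.add hoff)
    _ = ∑' j, |v j| := by
        rw [hdiag.tsum_add hoff, Summable.tsum_finsetSum fun i _ => (hshift (s i)).mul_left (a i)]
        simp only [tsum_mul_left, hshift_tsum, hdiag_tsum, ← Finset.sum_mul]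
        ring

end Stencil

theorem abs_slope_le {f : ℝ → ℝ} {μ : ℝ} (hμ : 0 ≤ μ) (hf : ∀ a b, |f a - f b| ≤ μ * |a - b|)
    (x y : ℝ) : |slope f x y| ≤ μ := by
  rcases eq_or_ne x y with rfl | hxy
  · simpa using hμ
  · rw [slope_def_field, abs_div, div_le_iff₀ (abs_pos.mpr (sub_ne_zero.mpr hxy.symm))]
    exact hf y x

theorem summable_abs_sub_pred_of_eq_zero (u : ℤ → ℝ) (N : ℤ) (hN : ∀ j, N ≤ |j| → u j = 0) :
    Summable fun j => |u j - u (j - 1)| := by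
  refine summable_of_ne_finset_zero (s := Finset.Icc (-N) N) fun j hj => ?_
  rw [Finset.mem_Icc] at hj
  rw [hN j (by rw [le_abs']; omega), hN (j - 1) (by rw [le_abs']; omega), sub_self, abs_zero]

theorem relaxed_step_sub_eq (p : ℝ → ℝ) (c e : ℝ) (u unew d v : ℤ → ℝ)
    (hv : ∀ j, v j = u j - u (j - 1)) (hdv : ∀ j, d j * v j = p (u j) - p (u (j - 1)))
    (hscheme : ∀ j : ℤ, unew j =
      u j + c * (p (u (j + 2)) - p (u j)) - c * (p (u j) - p (u (j - 2)))
          + e * (p (u (j + 1)) - 2 * p (u j) + p (u (j - 1))))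
    (j : ℤ) :
    unew j - unew (j - 1) = v j + ∑ i, ![c, c, e, e] i *
      (d (j + ![2, -2, 1, -1] i) * v (j + ![2, -2, 1, -1] i) - d j * v j) := by
  simp only [Fin.sum_univ_four, Matrix.cons_val, hdv]
  rw [hv, hscheme, hscheme]
  -- `ring_nf` also normalizes the indices, identifying e.g. `u (j + -2 - 1)` with `u (j - 1 - 2)`
  ring_nf

theorem stmt_9 (p : ℝ → ℝ) (hp : Monotone p)
    (μ : ℝ) (hμ : 0 < μ)
    (hlip : ∀ a b : ℝ, |p a - p b| ≤ μ * |a - b|)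
    (h Δt φ : ℝ) (hh : 0 < h) (hΔt : 0 < Δt) (hφ : 0 < φ)
    (hcfl : Δt ≤ 2 * h ^ 2 / (μ * (1 + 2 * h * φ)))
    (u unew : ℤ → ℝ)
    (hsupp : ∃ N : ℤ, ∀ j : ℤ, N ≤ |j| → u j = 0)
    (hscheme : ∀ j : ℤ, unew j =
      u j + ((Δt / h) / (4 * h)) * (p (u (j + 2)) - p (u j))
          - ((Δt / h) / (4 * h)) * (p (u j) - p (u (j - 2)))
          + ((Δt / h) * φ / 2) * (p (u (j + 1)) - 2 * p (u j) + p (u (j - 1)))) :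
    ∑' j : ℤ, |unew j - unew (j - 1)| ≤ ∑' j : ℤ, |u j - u (j - 1)| := by
  obtain ⟨N, hN⟩ := hsupp
  set c := (Δt / h) / (4 * h)
  set e := (Δt / h) * φ / 2
  have hcfl_weights : (∑ i, ![c, c, e, e] i) * μ ≤ 1 := by
    rw [le_div_iff₀ (by positivity)] at hcfl
    calc (∑ i, ![c, c, e, e] i) * μ = Δt * (μ * (1 + 2 * h * φ)) / (2 * h ^ 2) := by
          simp only [Fin.sum_univ_four, Matrix.cons_val, c, e]
          field_simp
          ring
      _ ≤ 1 := by rw [div_le_one (by positivity)]; linarith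
  have hc : 0 ≤ c := by positivity
  have he : 0 ≤ e := by positivity
  set d : ℤ → ℝ := fun j => slope p (u (j - 1)) (u j)
  set v : ℤ → ℝ := fun j => u j - u (j - 1)
  have hstep := relaxed_step_sub_eq p c e u unew d v (fun _ => rfl)
    (fun j => by rw [mul_comm]; exact sub_smul_slope p _ _) hscheme
  exact tsum_abs_add_sum_stencil_le ![2, -2, 1, -1] ![c, c, e, e] d v _ μ
    (fun i => by fin_cases i <;> assumption)
    (fun j => (hp.monotoneOn Set.univ).slope_nonneg trivial trivial)
    (fun j => (le_abs_self _).trans (abs_slope_le hμ.le hlip _ _)) hcfl_weights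
    (summable_abs_sub_pred_of_eq_zero u N hN) hstep
end

section
/- Von Neumann stability of the first-order relaxed scheme for linear diffusion: let M(ξ) = (λ/h)(cos ξ - 1)(cos ξ + 1 + hφ) for λ, h, φ > 0. Then |1 + M(ξ)| ≤ 1 for all ξ ∈ ℝ if and only if min_ξ M(ξ) ≥ -2; moreover, if hφ ≤ 2 the minimum of M over ξ is attained where cos ξ = -φh/2 and equals -(λ/h)(1 + φh/2)², so the scheme is stable precisely when Δt = λh ≤ 2h²/(1 + φh/2)². -/
theorem stmt_11 (l h φ : ℝ) (hl : 0 < l) (hh : 0 < h) (hφ : 0 < φ)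
    (hsmall : h * φ ≤ 2)
    (M : ℝ → ℝ)
    (hM : ∀ ξ : ℝ, M ξ = (l / h) * (Real.cos ξ - 1) * (Real.cos ξ + 1 + h * φ)) :
    ((∀ ξ : ℝ, |1 + M ξ| ≤ 1) ↔ (∀ ξ : ℝ, -2 ≤ M ξ)) ∧
    IsLeast (Set.range M) (-(l / h) * (1 + φ * h / 2) ^ 2) ∧
    (∃ ξ : ℝ, Real.cos ξ = -(φ * h / 2) ∧ M ξ = -(l / h) * (1 + φ * h / 2) ^ 2) ∧
    ((∀ ξ : ℝ, |1 + M ξ| ≤ 1) ↔ l * h ≤ 2 * h ^ 2 / (1 + φ * h / 2) ^ 2) := by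
  have hlh : 0 < l / h := div_pos hl hh
  have hMle : ∀ ξ : ℝ, M ξ ≤ 0 := by
    intro ξ
    rw [hM, mul_assoc]
    apply mul_nonpos_of_nonneg_of_nonpos hlh.le
    nlinarith [mul_nonneg (by nlinarith [Real.cos_le_one ξ] : (0:ℝ) ≤ 1 - Real.cos ξ)
      (by nlinarith [Real.neg_one_le_cos ξ] : (0:ℝ) ≤ Real.cos ξ + 1 + h * φ)]
  have hMge : ∀ ξ : ℝ, -(l / h) * (1 + φ * h / 2) ^ 2 ≤ M ξ := by
    intro ξ
    rw [hM]
    nlinarith [sq_nonneg (Real.cos ξ + φ * h / 2), hlh]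
  have iff1 : (∀ ξ : ℝ, |1 + M ξ| ≤ 1) ↔ (∀ ξ : ℝ, -2 ≤ M ξ) := by
    constructor
    · intro H ξ
      have := (abs_le.mp (H ξ)).1
      linarith
    · intro H ξ
      rw [abs_le]
      exact ⟨by linarith [H ξ], by linarith [hMle ξ]⟩
  have hcos : ∃ ξ : ℝ, Real.cos ξ = -(φ * h / 2) := by
    refine ⟨Real.arccos (-(φ * h / 2)), Real.cos_arccos ?_ ?_⟩ <;> nlinarith
  obtain ⟨ξ₀, hξ₀⟩ := hcos
  have hval : M ξ₀ = -(l / h) * (1 + φ * h / 2) ^ 2 := by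
    rw [hM, hξ₀]; ring
  have hls : 0 < (1 + φ * h / 2) ^ 2 := by positivity
  refine ⟨iff1, ⟨⟨ξ₀, hval⟩, ?_⟩, ⟨ξ₀, hξ₀, hval⟩, ?_⟩
  · rintro y ⟨ξ, rfl⟩
    exact hMge ξ
  · rw [iff1]
    have h3 : l / h * (1 + φ * h / 2) ^ 2 * h ^ 2 = l * h * (1 + φ * h / 2) ^ 2 := by
      field_simp
    constructor
    · intro H
      have h1 := H ξ₀
      rw [hval] at h1
      have key : l / h * (1 + φ * h / 2) ^ 2 ≤ 2 := by linarith
      rw [le_div_iff₀ hls, ← h3]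
      nlinarith [sq_nonneg h]
    · intro H ξ
      rw [le_div_iff₀ hls, ← h3] at H
      have key : l / h * (1 + φ * h / 2) ^ 2 ≤ 2 :=
        le_of_mul_le_mul_right H (by positivity)
      linarith [hMge ξ]
end
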